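/- Suppose Σ_{j=1}^{N} a_j = Σ_{j=1}^{N} c_j. Then for every n ≥ 1, all real numbers k_1, ..., k_n, and every integer m with 1 ≤ m ≤ n, the pyramidal identity Σ_{i=1}^{2^{m-1}N} x_i^m = Σ_{i=1}^{2^{m-1}N} y_i^m holds, where the first 2^{m-1}N entries of x^{(n)} and y^{(n)} coincide with the entries of x^{(m)} and y^{(m)}. -/

import Mathlib

/-- The pair of sequences `(x^{(t+1)}, y^{(t+1)})` of length `2^t * N` (0-based internal
level `t` corresponds to the paper's level `m = t + 1`) produced by the doubling
construction started from the `N` initial terms `a 0, ..., a (N-1)` and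
`c 0, ..., c (N-1)`.  `(seqXYN N a c k t i).1` is the `i`-th entry (0-based) of
`x^{(t+1)}` and `.2` that of `y^{(t+1)}`. -/
noncomputable def seqXYN (N : ℕ) (a c : ℕ → ℝ) (k : ℕ → ℝ) : ℕ → ℕ → ℝ × ℝ
  | 0, i => (a i + k 1, c i + k 1)
  | t + 1, i =>
      if i < 2 ^ t * N then seqXYN N a c k t i
      else ((seqXYN N a c k t (i - 2 ^ t * N)).2 + k (t + 2),
            (seqXYN N a c k t (i - 2 ^ t * N)).1 + k (t + 2))

/-- `XN N a c k n i` is the entry `x_{i+1}` of the sequence `x^{(n)}` (for `n ≥ 1`,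
`0 ≤ i < 2^(n-1) * N`). -/
noncomputable def XN (N : ℕ) (a c : ℕ → ℝ) (k : ℕ → ℝ) (n i : ℕ) : ℝ :=
  (seqXYN N a c k (n - 1) i).1

/-- `YN N a c k n i` is the entry `y_{i+1}` of the sequence `y^{(n)}` (for `n ≥ 1`,
`0 ≤ i < 2^(n-1) * N`). -/
noncomputable def YN (N : ℕ) (a c : ℕ → ℝ) (k : ℕ → ℝ) (n i : ℕ) : ℝ :=
  (seqXYN N a c k (n - 1) i).2

/-!
The doubling step is a Prouhet–Tarry–Escott argument. If two families `x`, `y` have equal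
power sums in every degree `j < p`, the binomial expansion of `∑ (x_i + K)^p` shows that
`∑ (x_i + K)^p - ∑ x_i^p` only involves lower power sums of `x`, hence equals the same
expression for `y`. So the concatenations `x ++ (y + K)` and `y ++ (x + K)` have equal power
sums in every degree `j ≤ p`. Starting from `∑ a_j = ∑ c_j` (degrees `0` and `1`), each level
gains one degree.
-/

open Finset

section PowerSums

variable {R ι : Type*} [CommSemiring R] (s : Finset ι) (f g : ι → R) (K : R) (p : ℕ)

theorem sum_add_pow_eq_sum_pow_add :
    ∑ i ∈ s, (f i + K) ^ p = ∑ i ∈ s, f i ^ p +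
      ∑ l ∈ range p, (∑ i ∈ s, f i ^ l) * K ^ (p - l) * p.choose l := by
  simp_rw [add_pow, sum_range_succ, sum_add_distrib, Nat.sub_self, pow_zero, Nat.choose_self,
    Nat.cast_one, mul_one, add_comm (∑ i ∈ s, f i ^ p)]
  rw [sum_comm]
  simp_rw [sum_mul]

theorem sum_pow_add_sum_add_pow_swap (h : ∀ j < p, ∑ i ∈ s, f i ^ j = ∑ i ∈ s, g i ^ j) :
    ∑ i ∈ s, f i ^ p + ∑ i ∈ s, (g i + K) ^ p =
      ∑ i ∈ s, g i ^ p + ∑ i ∈ s, (f i + K) ^ p := by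
  have hlow : ∑ l ∈ range p, (∑ i ∈ s, g i ^ l) * K ^ (p - l) * p.choose l =
      ∑ l ∈ range p, (∑ i ∈ s, f i ^ l) * K ^ (p - l) * p.choose l :=
    sum_congr rfl fun l hl => by rw [h l (mem_range.mp hl)]
  rw [sum_add_pow_eq_sum_pow_add, sum_add_pow_eq_sum_pow_add, hlow]
  ring

end PowerSums

section Pyramid

variable (N : ℕ) (a c k : ℕ → ℝ)

theorem seqXYN_succ_of_lt {t i : ℕ} (hi : i < 2 ^ t * N) :
    seqXYN N a c k (t + 1) i = seqXYN N a c k t i := by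
  rw [seqXYN, if_pos hi]

theorem seqXYN_succ_add (t i : ℕ) :
    seqXYN N a c k (t + 1) (2 ^ t * N + i) =
      ((seqXYN N a c k t i).2 + k (t + 2), (seqXYN N a c k t i).1 + k (t + 2)) := by
  rw [seqXYN, if_neg (by omega), Nat.add_sub_cancel_left]

theorem seqXYN_of_le {t t' i : ℕ} (ht : t ≤ t') (hi : i < 2 ^ t * N) :
    seqXYN N a c k t' i = seqXYN N a c k t i := by
  induction t', ht using Nat.le_induction with
  | base => rfl
  | succ t' ht ih =>
    have hi' : i < 2 ^ t' * N :=
      hi.trans_le (Nat.mul_le_mul_right _ (Nat.pow_le_pow_right two_pos ht))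
    rw [seqXYN_succ_of_lt N a c k hi', ih]

theorem sum_range_seqXYN_succ (t : ℕ) (F : ℝ × ℝ → ℝ) :
    ∑ i ∈ range (2 ^ (t + 1) * N), F (seqXYN N a c k (t + 1) i) =
      ∑ i ∈ range (2 ^ t * N), F (seqXYN N a c k t i) +
        ∑ i ∈ range (2 ^ t * N),
          F ((seqXYN N a c k t i).2 + k (t + 2), (seqXYN N a c k t i).1 + k (t + 2)) := by
  rw [show 2 ^ (t + 1) * N = 2 ^ t * N + 2 ^ t * N by ring, sum_range_add]
  simp_rw [seqXYN_succ_add]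
  congr 1
  exact sum_congr rfl fun i hi => by rw [seqXYN_succ_of_lt N a c k (mem_range.mp hi)]

theorem sum_fst_pow_eq_sum_snd_pow (h : ∑ j ∈ range N, a j = ∑ j ∈ range N, c j)
    {t p : ℕ} (hp : p ≤ t + 1) :
    ∑ i ∈ range (2 ^ t * N), (seqXYN N a c k t i).1 ^ p =
      ∑ i ∈ range (2 ^ t * N), (seqXYN N a c k t i).2 ^ p := by
  induction t generalizing p with
  | zero =>
    interval_cases p
    · simp
    · simp [seqXYN, sum_add_distrib, h]
  | succ t ih =>
    rw [sum_range_seqXYN_succ N a c k t (·.1 ^ p), sum_range_seqXYN_succ N a c k t (·.2 ^ p)]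
    exact sum_pow_add_sum_add_pow_swap _ _ _ _ _ fun j hj => ih (by omega)

end Pyramid

theorem pyramidal_system_N_general (N : ℕ) (a c : ℕ → ℝ)
    (h : ∑ j ∈ Finset.range N, a j = ∑ j ∈ Finset.range N, c j)
    (n : ℕ) (k : ℕ → ℝ) (m : ℕ) (hmn : m ≤ n) :
    ∑ i ∈ Finset.range (2 ^ (m - 1) * N), XN N a c k n i ^ m =
      ∑ i ∈ Finset.range (2 ^ (m - 1) * N), YN N a c k n i ^ m := by
  have hagree : ∀ i ∈ range (2 ^ (m - 1) * N),
      seqXYN N a c k (n - 1) i = seqXYN N a c k (m - 1) i := fun i hi =>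
    seqXYN_of_le N a c k (by omega) (mem_range.mp hi)
  calc ∑ i ∈ range (2 ^ (m - 1) * N), XN N a c k n i ^ m
      = ∑ i ∈ range (2 ^ (m - 1) * N), (seqXYN N a c k (m - 1) i).1 ^ m :=
        sum_congr rfl fun i hi => by rw [XN, hagree i hi]
    _ = ∑ i ∈ range (2 ^ (m - 1) * N), (seqXYN N a c k (m - 1) i).2 ^ m :=
        sum_fst_pow_eq_sum_snd_pow N a c k h (by omega)
    _ = ∑ i ∈ range (2 ^ (m - 1) * N), YN N a c k n i ^ m :=
        (sum_congr rfl fun i hi => by rw [YN, hagree i hi]).symm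

theorem pyramidal_system_N (N : ℕ) (hN : 1 ≤ N) (a c : ℕ → ℝ)
    (h : ∑ j ∈ Finset.range N, a j = ∑ j ∈ Finset.range N, c j)
    (n : ℕ) (hn : 1 ≤ n) (k : ℕ → ℝ) (m : ℕ) (hm1 : 1 ≤ m) (hmn : m ≤ n) :
    ∑ i ∈ Finset.range (2 ^ (m - 1) * N), XN N a c k n i ^ m =
      ∑ i ∈ Finset.range (2 ^ (m - 1) * N), YN N a c k n i ^ m :=
  pyramidal_system_N_general N a c h n k m hmn
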